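/- arXiv:1912.07158 — 2 statements merged into one kernel-verified Lean document; each statement's English description precedes it below -/
import Mathlib

section
/- Let A be a unital C*-algebra and u, e self-adjoint unitaries in A such that u − e is invertible. Then y = e(u + e)(u − e)⁻¹ satisfies y* = y, ey = −ye, and 1 + y² = 4(u − e)⁻². -/
/-!
Everything follows from two intertwining relations of `u - e` with the involutions,
`e (u - e) = (u - e) (-u)` and `(u + e) (u - e) = (u - e) (-(u + e))`, which pass to
`v = (u - e)⁻¹`. With `e (u + e) = (u + e) u` they give `e y = (u + e) v = -y e`, hence
`y² = (y e)(e y) = (u + e)² v²`, and `1 + y² = ((u - e)² + (u + e)²) v² = 4 v²`.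
-/

open scoped Ring

theorem Ring.inverse_mul_eq_mul_inverse_of_mul_eq_mul {M₀ : Type*} [MonoidWithZero M₀]
    {a x y : M₀} (ha : IsUnit a) (h : x * a = a * y) : a⁻¹ʳ * x = y * a⁻¹ʳ := by
  rw [Ring.inverse_mul_eq_iff_eq_mul _ _ _ ha, ← mul_assoc, ← h, mul_assoc,
    Ring.mul_inverse_cancel _ ha, mul_one]

noncomputable def gradedInverseCayley {R : Type*} [Ring R] (u e : R) : R :=
  e * (u + e) * (u - e)⁻¹ʳ

namespace gradedInverseCayley

section Ring

variable {R : Type*} [Ring R] {u e : R}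

theorem mul_sub_eq_sub_mul_neg (hu : u * u = 1) (he : e * e = 1) :
    e * (u - e) = (u - e) * -u := by
  rw [mul_sub, he, mul_neg, sub_mul, hu, neg_sub]

theorem mul_add_eq_add_mul (hu : u * u = 1) (he : e * e = 1) :
    e * (u + e) = (u + e) * u := by
  rw [mul_add, he, add_mul, hu, add_comm]

theorem add_mul_sub_eq_sub_mul_neg (hu : u * u = 1) (he : e * e = 1) :
    (u + e) * (u - e) = (u - e) * -(u + e) := by
  simp only [mul_sub, sub_mul, mul_add, add_mul, mul_neg, hu, he]
  abel

theorem add_sq_add_sub_sq (hu : u * u = 1) (he : e * e = 1) :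
    (u + e) ^ 2 + (u - e) ^ 2 = 4 := by
  simp only [sq, mul_sub, sub_mul, mul_add, add_mul, hu, he]
  abel_nf
  norm_num

theorem inverse_sub_mul_right (hu : u * u = 1) (he : e * e = 1) (h : IsUnit (u - e)) :
    (u - e)⁻¹ʳ * e = -u * (u - e)⁻¹ʳ :=
  Ring.inverse_mul_eq_mul_inverse_of_mul_eq_mul h (mul_sub_eq_sub_mul_neg hu he)

theorem inverse_sub_mul_add (hu : u * u = 1) (he : e * e = 1) (h : IsUnit (u - e)) :
    (u - e)⁻¹ʳ * (u + e) = -(u + e) * (u - e)⁻¹ʳ :=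
  Ring.inverse_mul_eq_mul_inverse_of_mul_eq_mul h (add_mul_sub_eq_sub_mul_neg hu he)

theorem mul_gradedInverseCayley (he : e * e = 1) :
    e * gradedInverseCayley u e = (u + e) * (u - e)⁻¹ʳ := by
  rw [gradedInverseCayley, mul_assoc, ← mul_assoc e, he, one_mul]

theorem gradedInverseCayley_mul (hu : u * u = 1) (he : e * e = 1) (h : IsUnit (u - e)) :
    gradedInverseCayley u e * e = -((u + e) * (u - e)⁻¹ʳ) := by
  rw [gradedInverseCayley, mul_assoc, inverse_sub_mul_right hu he h, mul_add_eq_add_mul hu he,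
    neg_mul, mul_neg, mul_assoc, ← mul_assoc u, hu, one_mul]

theorem anticommute (hu : u * u = 1) (he : e * e = 1) (h : IsUnit (u - e)) :
    e * gradedInverseCayley u e = -(gradedInverseCayley u e * e) := by
  rw [mul_gradedInverseCayley he, gradedInverseCayley_mul hu he h, neg_neg]

theorem sq_eq_add_sq_mul (hu : u * u = 1) (he : e * e = 1) (h : IsUnit (u - e)) :
    gradedInverseCayley u e ^ 2 = (u + e) ^ 2 * (u - e)⁻¹ʳ ^ 2 := by
  set y := gradedInverseCayley u e
  calc y ^ 2 = y * e * (e * y) := by rw [sq, mul_assoc y, ← mul_assoc e, he, one_mul]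
    _ = -((u + e) * ((u - e)⁻¹ʳ * (u + e)) * (u - e)⁻¹ʳ) := by
      rw [gradedInverseCayley_mul hu he h, mul_gradedInverseCayley he]; noncomm_ring
    _ = (u + e) ^ 2 * (u - e)⁻¹ʳ ^ 2 := by
      rw [inverse_sub_mul_add hu he h]; noncomm_ring

theorem one_add_sq (hu : u * u = 1) (he : e * e = 1) (h : IsUnit (u - e)) :
    1 + gradedInverseCayley u e ^ 2 = 4 * (u - e)⁻¹ʳ ^ 2 := by
  have hsq : (u - e) ^ 2 * (u - e)⁻¹ʳ ^ 2 = 1 := by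
    rw [Ring.inverse_pow, Ring.mul_inverse_cancel _ (h.pow 2)]
  rw [sq_eq_add_sq_mul hu he h, ← add_sq_add_sub_sq hu he, add_mul, hsq, add_comm]

end Ring

theorem isSelfAdjoint {R : Type*} [Ring R] [StarRing R] {u e : R}
    (hsu : IsSelfAdjoint u) (hu : u * u = 1) (hse : IsSelfAdjoint e) (he : e * e = 1)
    (h : IsUnit (u - e)) : IsSelfAdjoint (gradedInverseCayley u e) := by
  have hv : star (u - e)⁻¹ʳ = (u - e)⁻¹ʳ := (hsu.sub hse).ringInverse.star_eq
  rw [isSelfAdjoint_iff, gradedInverseCayley, star_mul, star_mul, hv, star_add, hsu.star_eq,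
    hse.star_eq, ← mul_assoc, inverse_sub_mul_add hu he h, mul_assoc, inverse_sub_mul_right hu he h,
    mul_add_eq_add_mul hu he]
  noncomm_ring

end gradedInverseCayley

/-- Graded inverse Cayley transform: for self-adjoint unitaries `u, e` with
`u - e` invertible, `y = e(u + e)(u - e)⁻¹` satisfies `y* = y`, `ey = -ye` and
`1 + y² = 4(u - e)⁻²`. -/
theorem graded_inverse_cayley_properties {A : Type*} [CStarAlgebra A] (u e : A)
    (hu : IsSelfAdjoint u) (hu2 : u * u = 1)
    (he : IsSelfAdjoint e) (he2 : e * e = 1) (h : IsUnit (u - e)) :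
    star (e * (u + e) * Ring.inverse (u - e)) = e * (u + e) * Ring.inverse (u - e) ∧
      e * (e * (u + e) * Ring.inverse (u - e))
        = -((e * (u + e) * Ring.inverse (u - e)) * e) ∧
      1 + (e * (u + e) * Ring.inverse (u - e)) ^ 2 = 4 * (Ring.inverse (u - e)) ^ 2 :=
  ⟨(gradedInverseCayley.isSelfAdjoint hu hu2 he he2 h).star_eq,
    gradedInverseCayley.anticommute hu2 he2 h, gradedInverseCayley.one_add_sq hu2 he2 h⟩
end

section
/- Let A be a unital C*-algebra and a ∈ A self-adjoint. In M₂(A), set T = [[0, −ia], [ia, 0]] and e = [[0, 1], [1, 0]]. Then e·(T + e)·(T − e)⁻¹ = [[0, C(a)*], [C(a), 0]], where C(a) = (a + i)(a − i)⁻¹ is the ungraded Cayley transform of a. -/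
/-!
With `u = a - i` and `v = a + i`, one computes `T - e = [[0, -i u], [i v, 0]]` and
`e (T + e) = [[i u, 0], [0, -i v]]`. Both `u` and `v` are invertible since the spectrum of a
self-adjoint element is real, so the antidiagonal matrix `T - e` is inverted entrywise and the
scalars `±i` cancel in the product.
-/

open scoped Ring

theorem IsSelfAdjoint.isUnit_sub_smul_one {A : Type*} [CStarAlgebra A] {a : A}
    (ha : IsSelfAdjoint a) {z : ℂ} (hz : z.im ≠ 0) : IsUnit (a - z • 1) := by
  have h : z ∉ spectrum ℂ a := fun h => hz (ha.im_eq_zero_of_mem_spectrum h)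
  rw [spectrum.notMem_iff, Algebra.algebraMap_eq_smul_one] at h
  simpa using h.neg

theorem Ring.inverse_smul {𝕜 R : Type*} [Semifield 𝕜] [Semiring R] [Algebra 𝕜 R] {c : 𝕜}
    (hc : c ≠ 0) (x : R) : (c • x)⁻¹ʳ = c⁻¹ • x⁻¹ʳ := by
  have hc' : (algebraMap 𝕜 R c)⁻¹ʳ = algebraMap 𝕜 R c⁻¹ := by
    simpa using Ring.inverse_unit (Units.map (algebraMap 𝕜 R : 𝕜 →* R) (Units.mk0 c hc))
  have hunit : IsUnit (algebraMap 𝕜 R c) := (IsUnit.mk0 c hc).map _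
  rw [Algebra.smul_def, Ring.inverse_mul (Or.inl hunit), hc', ← Algebra.commutes,
    Algebra.smul_def]

theorem Matrix.inverse_antidiag_fin_two {R : Type*} [Semiring R] {x y : R} (hx : IsUnit x)
    (hy : IsUnit y) : (!![0, x; y, 0])⁻¹ʳ = !![0, y⁻¹ʳ; x⁻¹ʳ, 0] := by
  have hr : !![0, x; y, 0] * !![0, y⁻¹ʳ; x⁻¹ʳ, 0] = 1 := by
    simp [Matrix.one_fin_two, Ring.mul_inverse_cancel _ hx, Ring.mul_inverse_cancel _ hy]
  have hl : !![0, y⁻¹ʳ; x⁻¹ʳ, 0] * !![0, x; y, 0] = 1 := by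
    simp [Matrix.one_fin_two, Ring.inverse_mul_cancel _ hx, Ring.inverse_mul_cancel _ hy]
  exact Ring.inverse_unit ⟨_, _, hr, hl⟩

/-- The graded Cayley transform of `T = [[0, -ia], [ia, 0]]` relative to
`e = [[0,1],[1,0]]` is the off-diagonal matrix of the ungraded Cayley
transform of `a` and its adjoint. -/
theorem graded_cayley_of_ungraded {A : Type*} [CStarAlgebra A] (a : A)
    (ha : IsSelfAdjoint a) :
    let T : Matrix (Fin 2) (Fin 2) A := !![0, -(Complex.I • a); Complex.I • a, 0]
    let e : Matrix (Fin 2) (Fin 2) A := !![0, 1; 1, 0]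
    e * (T + e) * Ring.inverse (T - e) =
      !![0, (a - Complex.I • (1 : A)) * Ring.inverse (a + Complex.I • (1 : A));
         (a + Complex.I • (1 : A)) * Ring.inverse (a - Complex.I • (1 : A)), 0] := by
  intro T e
  have hI : Complex.I ≠ 0 := Complex.I_ne_zero
  have hu : IsUnit (a - Complex.I • 1) := ha.isUnit_sub_smul_one (by simp)
  have hv : IsUnit (a + Complex.I • 1) := by
    simpa using ha.isUnit_sub_smul_one (z := -Complex.I) (by simp)
  have hTe : T - e =
      !![0, (-Complex.I) • (a - Complex.I • 1); Complex.I • (a + Complex.I • 1), 0] := by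
    ext i j; fin_cases i <;> fin_cases j <;> simp [T, e, smul_add, smul_smul, sub_eq_add_neg]
  have heTe : e * (T + e) =
      !![Complex.I • (a - Complex.I • 1), 0; 0, (-Complex.I) • (a + Complex.I • 1)] := by
    ext i j; fin_cases i <;> fin_cases j <;>
      simp [T, e, Matrix.mul_apply, smul_sub, smul_add, smul_smul]
  have hIu : IsUnit ((-Complex.I) • (a - Complex.I • 1)) :=
    hu.smul (Units.mk0 _ (neg_ne_zero.2 hI))
  have hIv : IsUnit (Complex.I • (a + Complex.I • 1)) := hv.smul (Units.mk0 _ hI)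
  rw [hTe, heTe, Matrix.inverse_antidiag_fin_two hIu hIv, Ring.inverse_smul hI,
    Ring.inverse_smul (neg_ne_zero.2 hI), Matrix.mul_fin_two]
  simp only [mul_zero, zero_mul, add_zero, zero_add, smul_mul_smul_comm, mul_inv_cancel₀ hI,
    mul_inv_cancel₀ (neg_ne_zero.2 hI), one_smul]
end
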